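/- Define K⁽¹⁾ = a > 0 and recursively K⁽ᵐ⁾ = c·Σ_{l=1}^{m-1} (1/l) K⁽ˡ⁾ K⁽ᵐ⁻ˡ⁾ for m ≥ 2, with c > 0. Then K⁽ᵐ⁺¹⁾ = 2⁻ᵐ binom(2m, m) · a · (c·a)ᵐ for all m ≥ 0, and consequently K⁽ᵐ⁺¹⁾ ≤ a(2ca)ᵐ. -/

import Mathlib

/-!
Substituting the guess `K (l + 1) = 2⁻ˡ B l · a (c a)ˡ`, with `B = Nat.centralBinom`, the weight
`1 / l` turns `B (l - 1)` into the Catalan number `catalan (l - 1)`, and the recursion becomes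
Jonah's identity `2 ∑_{i+j=n} catalan i · B j = B (n + 1)`. This follows from
`2 catalan j + B (j + 1) = 4 B j` and the convolution `∑_{i+j=n} B i · B j = 4ⁿ`; the latter comes
from weighting the convolution by `i`, which by symmetry gives `n/2` times it, and applying
`(j + 1) B (j + 1) = 2 (2j + 1) B j`. The bound is `B m ≤ 4ᵐ`.
-/

open Finset

theorem Finset.Nat.two_mul_sum_antidiagonal_fst_mul {R : Type*} [CommSemiring R] (f : ℕ → R)
    (n : ℕ) :
    2 * ∑ p ∈ antidiagonal n, (p.1 : R) * (f p.1 * f p.2)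
      = n * ∑ p ∈ antidiagonal n, f p.1 * f p.2 := by
  have hswap : ∑ p ∈ antidiagonal n, (p.1 : R) * (f p.1 * f p.2)
      = ∑ p ∈ antidiagonal n, (p.2 : R) * (f p.1 * f p.2) := by
    rw [← Finset.Nat.sum_antidiagonal_swap]
    exact sum_congr rfl fun p _ ↦ by simp only [Prod.fst_swap, Prod.snd_swap]; ring
  rw [two_mul]
  nth_rw 2 [hswap]
  rw [← sum_add_distrib, mul_sum]
  refine sum_congr rfl fun p hp ↦ ?_
  rw [← mem_antidiagonal.mp hp]
  push_cast
  ring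

theorem Nat.sum_antidiagonal_centralBinom_mul_centralBinom (n : ℕ) :
    ∑ p ∈ antidiagonal n, p.1.centralBinom * p.2.centralBinom = 4 ^ n := by
  induction n with
  | zero => simp
  | succ n ih =>
    have hweighted : ∑ p ∈ antidiagonal (n + 1), p.1 * (p.1.centralBinom * p.2.centralBinom)
        = 4 * ∑ p ∈ antidiagonal n, p.1 * (p.1.centralBinom * p.2.centralBinom)
          + 2 * ∑ p ∈ antidiagonal n, p.1.centralBinom * p.2.centralBinom := by
      rw [Finset.Nat.sum_antidiagonal_succ, zero_mul, zero_add, mul_sum, mul_sum,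
        ← sum_add_distrib]
      refine sum_congr rfl fun p _ ↦ ?_
      rw [← mul_assoc, Nat.succ_mul_centralBinom_succ]
      ring
    have hsymm_succ := Finset.Nat.two_mul_sum_antidiagonal_fst_mul Nat.centralBinom (n + 1)
    have hsymm := Finset.Nat.two_mul_sum_antidiagonal_fst_mul Nat.centralBinom n
    push_cast at hsymm_succ hsymm
    rw [hweighted, ih] at hsymm_succ
    rw [ih] at hsymm
    refine Nat.eq_of_mul_eq_mul_left (by positivity : 0 < n + 1) ?_
    rw [← hsymm_succ, pow_succ]
    linarith

theorem Nat.two_mul_catalan_add_centralBinom_succ (n : ℕ) :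
    2 * catalan n + (n + 1).centralBinom = 4 * n.centralBinom := by
  refine Nat.eq_of_mul_eq_mul_left (by positivity : 0 < n + 1) ?_
  rw [mul_add, Nat.succ_mul_centralBinom_succ, ← succ_mul_catalan_eq_centralBinom]
  ring

theorem Nat.two_mul_sum_antidiagonal_catalan_mul_centralBinom (n : ℕ) :
    2 * ∑ p ∈ antidiagonal n, catalan p.1 * p.2.centralBinom = (n + 1).centralBinom := by
  have h := Nat.sum_antidiagonal_centralBinom_mul_centralBinom (n + 1)
  rw [Finset.Nat.sum_antidiagonal_succ, Nat.centralBinom_zero, one_mul, pow_succ,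
    ← Nat.sum_antidiagonal_centralBinom_mul_centralBinom n, sum_mul] at h
  dsimp only at h
  have : ∑ p ∈ antidiagonal n, p.1.centralBinom * p.2.centralBinom * 4
      = 2 * ∑ p ∈ antidiagonal n, catalan p.1 * p.2.centralBinom
        + ∑ p ∈ antidiagonal n, (p.1 + 1).centralBinom * p.2.centralBinom := by
    rw [mul_sum, ← sum_add_distrib]
    refine sum_congr rfl fun p _ ↦ ?_
    rw [← mul_assoc, ← add_mul, Nat.two_mul_catalan_add_centralBinom_succ]
    ring
  omega

theorem Finset.Nat.sum_Ico_one_eq_sum_antidiagonal {M : Type*} [AddCommMonoid M]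
    (f : ℕ → ℕ → M) (n : ℕ) :
    ∑ l ∈ Ico 1 (n + 2), f l (n + 2 - l) = ∑ p ∈ antidiagonal n, f (p.1 + 1) (p.2 + 1) := by
  rw [sum_Ico_eq_sum_range,
    Finset.Nat.sum_antidiagonal_eq_sum_range_succ fun i j ↦ f (i + 1) (j + 1)]
  refine sum_congr rfl fun k hk ↦ ?_
  have : k ≤ n := Nat.lt_succ_iff.mp (mem_range.mp hk)
  rw [add_comm 1 k, show n + 2 - (k + 1) = n - k + 1 by omega]

/-- The claimed value of `K (m + 1)`. -/
noncomputable def closedForm (a c : ℝ) (m : ℕ) : ℝ :=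
  2⁻¹ ^ m * m.centralBinom * a * (c * a) ^ m

theorem closedForm_succ (a c : ℝ) (n : ℕ) :
    c * ∑ p ∈ antidiagonal n, 1 / ((p.1 + 1 : ℕ) : ℝ) * closedForm a c p.1 * closedForm a c p.2
      = closedForm a c (n + 1) := by
  have hterm : ∀ p ∈ antidiagonal n,
      1 / ((p.1 + 1 : ℕ) : ℝ) * closedForm a c p.1 * closedForm a c p.2
        = catalan p.1 * p.2.centralBinom * (2⁻¹ ^ n * a ^ 2 * (c * a) ^ n) := by
    intro p hp
    have hcat : ((p.1 + 1 : ℕ) : ℝ) * catalan p.1 = p.1.centralBinom := by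
      exact_mod_cast succ_mul_catalan_eq_centralBinom p.1
    rw [closedForm, closedForm, ← hcat, ← mem_antidiagonal.mp hp, pow_add, pow_add]
    field_simp
  have hjonah : 2 * ∑ p ∈ antidiagonal n, (catalan p.1 : ℝ) * p.2.centralBinom
      = (n + 1).centralBinom := by
    exact_mod_cast Nat.two_mul_sum_antidiagonal_catalan_mul_centralBinom n
  rw [sum_congr rfl hterm, ← sum_mul, closedForm, ← hjonah]
  ring

theorem closedForm_le_mul_pow {a c : ℝ} (ha : 0 ≤ a) (hc : 0 ≤ c) (m : ℕ) :
    closedForm a c m ≤ a * (2 * c * a) ^ m := by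
  have hB : (m.centralBinom : ℝ) ≤ 4 ^ m := by exact_mod_cast m.centralBinom_le_four_pow
  calc closedForm a c m = 2⁻¹ ^ m * m.centralBinom * (a * (c * a) ^ m) := by
        rw [closedForm]; ring
    _ ≤ 2⁻¹ ^ m * 4 ^ m * (a * (c * a) ^ m) := by gcongr
    _ = a * (2 * c * a) ^ m := by
        rw [← mul_pow, show (2 : ℝ)⁻¹ * 4 = 2 by norm_num]
        ring

/-- If `K 1 = a > 0` and `K m = c Σ_{l=1}^{m-1} (1/l) K l K (m-l)` for
`m ≥ 2` with `c > 0`, then `K (m+1) = 2⁻ᵐ binom(2m, m) a (c a)ᵐ` and consequently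
`K (m+1) ≤ a (2 c a)ᵐ` for all `m ≥ 0`. -/
theorem recursion_closed_form_and_bound
    (a c : ℝ) (ha : 0 < a) (hc : 0 < c) (K : ℕ → ℝ)
    (hK1 : K 1 = a)
    (hKrec : ∀ m : ℕ, 2 ≤ m →
      K m = c * ∑ l ∈ Ico 1 m, (1 / (l : ℝ)) * K l * K (m - l)) :
    ∀ m : ℕ,
      K (m + 1) = (2 : ℝ)⁻¹ ^ m * (Nat.choose (2 * m) m : ℝ) * a * (c * a) ^ m ∧
      K (m + 1) ≤ a * (2 * c * a) ^ m := by
  have hclosed : ∀ m, K (m + 1) = closedForm a c m := by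
    intro m
    induction m using Nat.strong_induction_on with
    | _ m ih =>
      cases m with
      | zero => simpa [closedForm] using hK1
      | succ n =>
        rw [hKrec (n + 2) (by omega),
          Finset.Nat.sum_Ico_one_eq_sum_antidiagonal (fun i j ↦ 1 / (i : ℝ) * K i * K j),
          ← closedForm_succ]
        refine congrArg (c * ·) (sum_congr rfl fun p hp ↦ ?_)
        have hsum : p.1 + p.2 = n := mem_antidiagonal.mp hp
        rw [ih p.1 (by omega), ih p.2 (by omega)]
  intro m
  rw [hclosed m, ← Nat.centralBinom_eq_two_mul_choose]
  exact ⟨rfl, closedForm_le_mul_pow ha.le hc.le m⟩
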